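/- Every three-element subset of one of the fifty-five generator quadruples of Δ' is contained in exactly two of the fifty-five quadruples. (Each 3-dimensional cone of Δ' is a common facet of exactly two maximal cones, so the underlying simplicial complex of Δ' is a closed pseudomanifold.) -/
import Mathlib


open Matrix

noncomputable section

def E1 : Fin 18 := 0
def E2 : Fin 18 := 1
def E3 : Fin 18 := 2
def E4 : Fin 18 := 3
def D1 : Fin 18 := 4
def D2 : Fin 18 := 5
def D3 : Fin 18 := 6
def D4 : Fin 18 := 7
def C1 : Fin 18 := 8
def C2 : Fin 18 := 9
def C3 : Fin 18 := 10
def C4 : Fin 18 := 11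
def C5 : Fin 18 := 12
def C6 : Fin 18 := 13
def C7 : Fin 18 := 14
def C8 : Fin 18 := 15
def C9 : Fin 18 := 16
def C10 : Fin 18 := 17

def Qgen : Fin 55 → Finset (Fin 18) :=
  ![{E1, E2, E3, E4},
    {D1, E2, E3, E4},
    {E1, D2, E3, E4},
    {E1, E2, D3, E4},
    {E1, E2, E3, D4},
    {D1, D2, E3, E4},
    {E1, D2, D3, E4},
    {D1, E2, D3, E4},
    {E1, D2, E3, D3},
    {E1, E2, D3, D1},
    {D1, E2, E3, D2},
    {E1, E2, D1, D4},
    {D2, E2, E3, D4},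
    {D1, E2, D2, D4},
    {C1, D3, E3, D4},
    {E1, C1, E3, D4},
    {E1, D3, E3, C1},
    {C1, D1, D3, D4},
    {E1, D1, C1, D4},
    {E1, D1, D3, C1},
    {C2, D2, E3, D4},
    {D3, C2, E3, D4},
    {C3, D2, C2, D4},
    {D3, C3, C2, D4},
    {D3, D2, C3, D4},
    {C3, D2, E3, C2},
    {D3, C3, E3, C2},
    {D3, D2, E3, C3},
    {C5, D2, D3, E4},
    {C4, C5, D3, E4},
    {C6, D2, C5, E4},
    {C4, C6, C5, E4},
    {C4, D2, C6, E4},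
    {C6, D2, D3, C5},
    {C4, C6, D3, C5},
    {C4, D2, D3, C6},
    {C8, C4, D3, E4},
    {C7, C8, D3, E4},
    {C7, C4, C8, E4},
    {D1, C7, D3, E4},
    {D1, C4, C7, E4},
    {D1, C8, D3, C7},
    {D1, C4, C8, C7},
    {D1, C4, D3, C8},
    {C9, D2, C4, E4},
    {C10, C9, C4, E4},
    {D1, C10, C4, E4},
    {D1, C9, C10, E4},
    {D1, D2, C9, E4},
    {C10, D2, C4, C9},
    {D1, D2, C10, C9},
    {D1, D2, C4, C10},
    {C4, D2, D3, D4},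
    {D1, C4, D3, D4},
    {D1, D2, C4, D4}]

set_option maxRecDepth 10000 in
set_option maxHeartbeats 2000000 in
/-- Every three-element subset of one of the fifty-five generator quadruples
of Δ' is contained in exactly two of the quadruples. -/
theorem delta_prime_pseudomanifold :
    ∀ T : Finset (Fin 18), T.card = 3 → (∃ i, T ⊆ Qgen i) →
      (Finset.univ.filter (fun i : Fin 55 => T ⊆ Qgen i)).card = 2 := by
  have key : ∀ i : Fin 55, ∀ x ∈ Qgen i,
      (Finset.univ.filter (fun j : Fin 55 => (Qgen i).erase x ⊆ Qgen j)).card = 2 := by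
    decide
  have hc : ∀ i : Fin 55, (Qgen i).card = 4 := by decide
  rintro T hcard ⟨i, hi⟩
  obtain ⟨x, hx, hT⟩ : ∃ x ∈ Qgen i, T = (Qgen i).erase x := by
    have hss : T ⊂ Qgen i := hi.ssubset_of_ne (by
      intro h; rw [h, hc i] at hcard; omega)
    obtain ⟨x, hx, hxT⟩ := Finset.exists_of_ssubset hss
    refine ⟨x, hx, Finset.eq_of_subset_of_card_le ?_ ?_⟩
    · intro y hy; exact Finset.mem_erase.mpr ⟨fun h => hxT (h ▸ hy), hi hy⟩
    · rw [Finset.card_erase_of_mem hx, hc i, hcard]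
  rw [hT]
  exact key i x hx
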